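/- arXiv:1703.05754 — 6 statements merged into one kernel-verified Lean document; each statement's English description precedes it below -/
import Mathlib

section
/- Every subring R of the rational numbers ℚ is solid; that is, the ℤ-linear map from R ⊗_ℤ R to R induced by multiplication is bijective. -/
/-!
A subring `R` of `ℚ` is the localization of `ℤ` at the integers that are invertible in `R`:
if `q ∈ R` then Bézout's identity `u * q.num + v * q.den = 1` gives `1 / q.den = u * q + v ∈ R`,
so `q = q.num / q.den` is a fraction with invertible denominator. For a localization `A` of a
ring, multiplication `A ⊗ A → A` is an isomorphism.
-/

namespace Subring

variable (R : Subring ℚ)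

theorem inv_den_mem {q : ℚ} (hq : q ∈ R) : (q.den : ℚ)⁻¹ ∈ R := by
  obtain ⟨u, v, huv⟩ := Rat.isCoprime_num_den q
  have hinv : (q.den : ℚ)⁻¹ = u * q + v := by
    refine (eq_inv_of_mul_eq_one_left ?_).symm
    rw [add_mul, mul_assoc, Rat.mul_den_eq_num]
    exact_mod_cast huv
  rw [hinv]
  exact add_mem (mul_mem (intCast_mem R u) hq) (intCast_mem R v)

instance isLocalization_comap_isUnit :
    IsLocalization ((IsUnit.submonoid R).comap (algebraMap ℤ R)) R := by
  refine (_root_.isLocalization_iff _ _).mpr ⟨fun n ↦ n.2, fun q ↦ ?_, fun h ↦ ?_⟩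
  · refine ⟨(q.1.num, ⟨q.1.den, ?_⟩), ?_⟩
    · exact IsUnit.of_mul_eq_one ⟨_, R.inv_den_mem q.2⟩ (Subtype.ext (by simp))
    · exact Subtype.ext (by simp)
  · exact ⟨1, by simpa using h⟩

end Subring

/-- Every subring `R` of the rationals is solid: the multiplication-induced
`ℤ`-linear map `R ⊗_ℤ R → R` is bijective. -/
theorem subring_rat_solid (R : Subring ℚ) :
    Function.Bijective (LinearMap.mul' ℤ R) :=
  IsLocalization.bijective_linearMap_mul' ((IsUnit.submonoid R).comap (algebraMap ℤ R)) R
end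

section
/- Every subring R of ℚ is a localization of ℤ at a set of primes: R is equal to the subring of ℚ generated by the set of inverses p⁻¹ of those prime numbers p for which p⁻¹ lies in R. -/
/-- Every subring `R` of `ℚ` is a localization of `ℤ` at a set of primes:
`R` is the subring of `ℚ` generated by the inverses `p⁻¹` of those prime
numbers `p` with `p⁻¹ ∈ R`. -/
theorem subring_rat_eq_closure_prime_inverses (R : Subring ℚ) :
    R = Subring.closure
        {x : ℚ | ∃ p : ℕ, p.Prime ∧ ((p : ℚ)⁻¹ ∈ R) ∧ x = (p : ℚ)⁻¹} := by
  set S := {x : ℚ | ∃ p : ℕ, p.Prime ∧ ((p : ℚ)⁻¹ ∈ R) ∧ x = (p : ℚ)⁻¹} with hS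
  have key : ∀ n : ℕ, n ≠ 0 → ((n : ℚ)⁻¹ ∈ R) → (n : ℚ)⁻¹ ∈ Subring.closure S := by
    intro n
    induction n using Nat.strong_induction_on with
    | _ n ih =>
      intro hn hmem
      rcases eq_or_ne n 1 with rfl | h1
      · simpa using Subring.one_mem (Subring.closure S)
      · obtain ⟨p, hp, m, rfl⟩ := Nat.exists_prime_and_dvd h1
        have hm0 : m ≠ 0 := by rintro rfl; simp at hn
        have hp0 : (p : ℚ) ≠ 0 := Nat.cast_ne_zero.mpr hp.ne_zero
        have hm0' : (m : ℚ) ≠ 0 := Nat.cast_ne_zero.mpr hm0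
        have hsplit : ((p * m : ℕ) : ℚ)⁻¹ = (p : ℚ)⁻¹ * (m : ℚ)⁻¹ := by
          push_cast; rw [mul_inv]
        have hpinv : (p : ℚ)⁻¹ = (m : ℚ) * ((p * m : ℕ) : ℚ)⁻¹ := by
          push_cast; field_simp
        have hminv : (m : ℚ)⁻¹ = (p : ℚ) * ((p * m : ℕ) : ℚ)⁻¹ := by
          push_cast; field_simp
        have hpR : (p : ℚ)⁻¹ ∈ R := by
          rw [hpinv]; exact R.mul_mem (natCast_mem R m) hmem
        have hmR : (m : ℚ)⁻¹ ∈ R := by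
          rw [hminv]; exact R.mul_mem (natCast_mem R p) hmem
        have hlt : m < p * m := by
          have : 1 < p := hp.one_lt
          calc m = 1 * m := (one_mul m).symm
            _ < p * m := (Nat.mul_lt_mul_right (Nat.pos_of_ne_zero hm0)).mpr this
        have hmcl : (m : ℚ)⁻¹ ∈ Subring.closure S := ih m hlt hm0 hmR
        have hpcl : (p : ℚ)⁻¹ ∈ Subring.closure S :=
          Subring.subset_closure ⟨p, hp, hpR, rfl⟩
        rw [hsplit]
        exact Subring.mul_mem _ hpcl hmcl
  ext x
  constructor
  · intro hx
    have hden : (x.den : ℚ) ≠ 0 := Nat.cast_ne_zero.mpr x.den_nz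
    -- 1/den ∈ R via Bezout
    have hcop : IsCoprime (x.num) (x.den : ℤ) :=
      Int.isCoprime_iff_gcd_eq_one.mpr x.reduced
    obtain ⟨u, v, huv⟩ := hcop
    have hx' : (x : ℚ) = (x.num : ℚ) / (x.den : ℚ) := (Rat.num_div_den x).symm
    have hmulden : (x.den : ℚ) * x = (x.num : ℚ) := by
      rw [mul_comm]
      exact (eq_div_iff hden).mp hx'
    have hdinv : (x.den : ℚ)⁻¹ = (u : ℚ) * x + (v : ℚ) := by
      refine (eq_inv_of_mul_eq_one_left ?_).symm
      have h1 : ((u * x.num + v * x.den : ℤ) : ℚ) = 1 := by exact_mod_cast huv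
      push_cast at h1
      calc ((u : ℚ) * x + v) * (x.den : ℚ)
          = (u : ℚ) * ((x.den : ℚ) * x) + v * x.den := by ring
        _ = (u : ℚ) * x.num + v * x.den := by rw [hmulden]
        _ = 1 := h1
    have hdR : (x.den : ℚ)⁻¹ ∈ R := by
      rw [hdinv]
      exact R.add_mem (R.mul_mem (intCast_mem R u) hx) (intCast_mem R v)
    have hdcl : (x.den : ℚ)⁻¹ ∈ Subring.closure S := key x.den x.den_nz hdR
    have hfin : (x.num : ℚ) * (x.den : ℚ)⁻¹ ∈ Subring.closure S :=
      Subring.mul_mem _ (intCast_mem (Subring.closure S) x.num) hdcl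
    rwa [← div_eq_mul_inv, Rat.num_div_den] at hfin
  · intro hx
    refine Subring.closure_le.mpr ?_ hx
    rintro y ⟨p, hp, hpR, rfl⟩
    exact hpR
end

section
/- Let J be a set of prime numbers, let M be the submonoid of ℤ generated by J, and let n be a positive integer each of whose prime factors belongs to J. Then the product ring (Localization of ℤ at M) × ℤ/nℤ is solid; that is, the multiplication-induced ℤ-linear map from the tensor product over ℤ of this ring with itself to the ring is bijective. -/
/-!
A commutative ring `A` is solid exactly when `x ⊗ 1 = 1 ⊗ x` in `A ⊗[ℤ] A` for every `x`.
Localizations and quotients of `ℤ` are solid. Since every prime factor of `n` is inverted in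
`ℤ[J⁻¹]`, the integer `n` is a unit there while it kills `ℤ/nℤ`, so `ℤ[J⁻¹] ⊗ ℤ/nℤ = 0`; hence
the mixed terms in the tensor square of the product vanish and the criterion passes to the
product.
-/

open TensorProduct

theorem LinearMap.mul'_bijective_iff_tmul_one_eq_one_tmul {R A : Type*} [CommSemiring R]
    [CommSemiring A] [Algebra R A] :
    Function.Bijective (LinearMap.mul' R A) ↔ ∀ x : A, x ⊗ₜ[R] (1 : A) = 1 ⊗ₜ x := by
  refine ⟨fun h x => h.injective (by simp), fun h => ⟨?_, fun x => ⟨x ⊗ₜ 1, by simp⟩⟩⟩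
  have hmul : ∀ t : A ⊗[R] A, t = LinearMap.mul' R A t ⊗ₜ 1 := by
    intro t
    induction t using TensorProduct.induction_on with
    | zero => simp
    | tmul x y =>
      calc x ⊗ₜ[R] y = (x ⊗ₜ[R] (1 : A)) * (1 ⊗ₜ y) := by simp
        _ = (1 ⊗ₜ x) * (1 ⊗ₜ y) := by rw [h]
        _ = (x * y) ⊗ₜ 1 := by rw [Algebra.TensorProduct.tmul_mul_tmul, one_mul, h]
        _ = LinearMap.mul' R A (x ⊗ₜ y) ⊗ₜ 1 := by rw [LinearMap.mul'_apply]
    | add s t hs ht => rw [map_add, add_tmul, ← hs, ← ht]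
  exact fun s t hst => by rw [hmul s, hmul t, hst]

theorem TensorProduct.tmul_one_eq_one_tmul_of_mul_eq_algebraMap {R A : Type*} [CommSemiring R]
    [CommSemiring A] [Algebra R A] {x : A} (r a : R) (hr : IsUnit (algebraMap R A r))
    (hx : x * algebraMap R A r = algebraMap R A a) : x ⊗ₜ[R] (1 : A) = 1 ⊗ₜ x := by
  obtain ⟨u, hu⟩ := hr
  have hinv : (1 : A) = r • (↑u⁻¹ : A) := by rw [_root_.Algebra.smul_def, ← hu, Units.mul_inv]
  calc x ⊗ₜ[R] (1 : A) = (r • x) ⊗ₜ (↑u⁻¹ : A) := by rw [hinv, tmul_smul, smul_tmul']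
    _ = (a • (1 : A)) ⊗ₜ (↑u⁻¹ : A) := by
      rw [_root_.Algebra.smul_def, mul_comm, hx, Algebra.algebraMap_eq_smul_one]
    _ = 1 ⊗ₜ (a • (↑u⁻¹ : A)) := by rw [smul_tmul]
    _ = 1 ⊗ₜ x := by
      rw [_root_.Algebra.smul_def, ← hx, mul_comm x, ← hu, mul_comm, ← mul_assoc, Units.inv_mul,
        one_mul]

theorem TensorProduct.subsingleton_of_surjective_smul {R M N : Type*} [CommSemiring R]
    [AddCommMonoid M] [AddCommMonoid N] [Module R M] [Module R N] (r : R)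
    (hM : Function.Surjective (r • · : M → M)) (hN : ∀ n : N, r • n = 0) :
    Subsingleton (M ⊗[R] N) := by
  refine subsingleton_of_forall_eq 0 fun t => ?_
  induction t using TensorProduct.induction_on with
  | zero => rfl
  | tmul m n =>
    obtain ⟨m', rfl⟩ := hM m
    rw [smul_tmul, hN, tmul_zero]
  | add s t hs ht => rw [hs, ht, add_zero]

theorem Prod.tmul_one_eq_one_tmul {R A B : Type*} [CommSemiring R] [CommSemiring A]
    [CommSemiring B] [Algebra R A] [Algebra R B] [Subsingleton (A ⊗[R] B)]
    (hA : ∀ a : A, a ⊗ₜ[R] (1 : A) = 1 ⊗ₜ a) (hB : ∀ b : B, b ⊗ₜ[R] (1 : B) = 1 ⊗ₜ b)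
    (z : A × B) : z ⊗ₜ[R] (1 : A × B) = 1 ⊗ₜ z := by
  have : Subsingleton (B ⊗[R] A) := (TensorProduct.comm R B A).toEquiv.subsingleton
  have hAB (a : A) (b : B) : ((a, 0) : A × B) ⊗ₜ[R] ((0, b) : A × B) = 0 := by
    simpa using congrArg (TensorProduct.map (LinearMap.inl R A B) (LinearMap.inr R A B))
      (Subsingleton.elim (a ⊗ₜ[R] b) 0)
  have hBA (b : B) (a : A) : ((0, b) : A × B) ⊗ₜ[R] ((a, 0) : A × B) = 0 := by
    simpa using congrArg (TensorProduct.map (LinearMap.inr R A B) (LinearMap.inl R A B))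
      (Subsingleton.elim (b ⊗ₜ[R] a) 0)
  have hAA (a : A) : ((a, 0) : A × B) ⊗ₜ[R] ((1, 0) : A × B) = (1, 0) ⊗ₜ (a, 0) := by
    simpa using congrArg (TensorProduct.map (LinearMap.inl R A B) (LinearMap.inl R A B)) (hA a)
  have hBB (b : B) : ((0, b) : A × B) ⊗ₜ[R] ((0, 1) : A × B) = (0, 1) ⊗ₜ (0, b) := by
    simpa using congrArg (TensorProduct.map (LinearMap.inr R A B) (LinearMap.inr R A B)) (hB b)
  have hsplit (a : A) (b : B) : ((a, b) : A × B) = (a, 0) + (0, b) := by simp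
  obtain ⟨a, b⟩ := z
  rw [Prod.one_eq_mk, hsplit a b, hsplit 1 1]
  simp only [add_tmul, tmul_add, hAB, hBA, hAA, hBB, add_zero, zero_add]

-- The next two lemmas are stated for an arbitrary ring over `ℤ`, so that `LinearMap.mul' ℤ` refers
-- to `AddCommGroup.toIntModule` as in the theorem. `Localization M` carries its own `Algebra ℤ`
-- instance, the one Mathlib's `IsLocalization.bijective_linearMap_mul'` is stated for.
theorem Int.mul'_bijective_of_forall_exists_mul_eq_intCast {A : Type*} [CommRing A]
    (h : ∀ x : A, ∃ k a : ℤ, IsUnit (k : A) ∧ x * k = a) :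
    Function.Bijective (LinearMap.mul' ℤ A) := by
  refine LinearMap.mul'_bijective_iff_tmul_one_eq_one_tmul.mpr fun x => ?_
  obtain ⟨k, a, hk, hx⟩ := h x
  exact tmul_one_eq_one_tmul_of_mul_eq_algebraMap k a (by simpa using hk) (by simpa using hx)

theorem Int.mul'_prod_bijective {A B : Type*} [CommRing A] [CommRing B]
    [Subsingleton (A ⊗[ℤ] B)] (hA : Function.Bijective (LinearMap.mul' ℤ A))
    (hB : Function.Bijective (LinearMap.mul' ℤ B)) :
    Function.Bijective (LinearMap.mul' ℤ (A × B)) := by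
  rw [LinearMap.mul'_bijective_iff_tmul_one_eq_one_tmul] at hA hB ⊢
  exact Prod.tmul_one_eq_one_tmul hA hB

theorem Nat.mem_closure_of_forall_prime_dvd_mem {J : Set ℕ} {n : ℕ} (hn : n ≠ 0)
    (hJ : ∀ p : ℕ, p.Prime → p ∣ n → p ∈ J) : n ∈ Submonoid.closure J := by
  rw [← Nat.prod_primeFactorsList hn]
  refine Submonoid.list_prod_mem _ fun p hp => Submonoid.subset_closure ?_
  exact hJ p (Nat.prime_of_mem_primeFactorsList hp) (Nat.dvd_of_mem_primeFactorsList hp)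

theorem Localization.mul'_int_bijective (M : Submonoid ℤ) :
    Function.Bijective (LinearMap.mul' ℤ (Localization M)) := by
  refine Int.mul'_bijective_of_forall_exists_mul_eq_intCast fun x => ?_
  obtain ⟨⟨a, s⟩, hx⟩ := IsLocalization.surj M x
  exact ⟨s, a, by simpa using IsLocalization.map_units (Localization M) s, by simpa using hx⟩

theorem Localization.subsingleton_tensor_zmod {M : Submonoid ℤ} {n : ℕ} (hn : (n : ℤ) ∈ M) :
    Subsingleton (Localization M ⊗[ℤ] ZMod n) := by
  have hunit : IsUnit ((n : ℤ) : Localization M) := by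
    simpa using IsLocalization.map_units (Localization M) (⟨n, hn⟩ : M)
  refine subsingleton_of_surjective_smul (n : ℤ) (fun x => ⟨↑hunit.unit⁻¹ * x, ?_⟩) (by simp)
  dsimp only
  rw [zsmul_eq_mul, ← mul_assoc, hunit.mul_val_inv, one_mul]

theorem localization_prod_zmod_solid_general (J : Set ℕ)
    (n : ℕ) (hn : 0 < n) (hfac : ∀ p : ℕ, p.Prime → p ∣ n → p ∈ J) :
    Function.Bijective (LinearMap.mul' ℤ
      (Localization (Submonoid.closure ((Nat.cast : ℕ → ℤ) '' J)) × ZMod n)) := by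
  set M := Submonoid.closure ((Nat.cast : ℕ → ℤ) '' J)
  have hnM : (n : ℤ) ∈ M := by
    have := Submonoid.mem_map_of_mem (Nat.castRingHom ℤ)
      (Nat.mem_closure_of_forall_prime_dvd_mem hn.ne' hfac)
    rwa [MonoidHom.map_mclosure] at this
  have := Localization.subsingleton_tensor_zmod hnM
  exact Int.mul'_prod_bijective (Localization.mul'_int_bijective M)
    (LinearMap.mul'_bijective_of_surjective ℤ (ZMod n) ZMod.intCast_surjective)

/-- Let `J` be a set of primes, `M` the submonoid of `ℤ` generated by `J`, and
`n` a positive integer all of whose prime factors belong to `J`.  Then the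
product ring `ℤ[J⁻¹] × ℤ/nℤ = (Localization of ℤ at M) × ℤ/nℤ` is solid. -/
theorem localization_prod_zmod_solid (J : Set ℕ) (hJ : ∀ p ∈ J, Nat.Prime p)
    (n : ℕ) (hn : 0 < n) (hfac : ∀ p : ℕ, p.Prime → p ∣ n → p ∈ J) :
    Function.Bijective (LinearMap.mul' ℤ
      (Localization (Submonoid.closure ((Nat.cast : ℕ → ℤ) '' J)) × ZMod n)) :=
  localization_prod_zmod_solid_general J n hn hfac
end

section
/- Let J be a set of prime numbers, let M be the submonoid of ℤ generated by J, and let n be a positive integer. If the product ring (Localization of ℤ at M) × ℤ/nℤ is solid, i.e. the multiplication-induced ℤ-linear map from its tensor square over ℤ to itself is bijective, then every prime factor of n belongs to J. -/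
/-!
If `R × ℤ/n` is solid, then `(1, 0) ⊗ (0, 1)` vanishes, since it maps to `(1, 0) * (0, 1) = 0`;
projecting gives `1 ⊗ 1 = 0` in `R ⊗ ℤ/n ≅ R/nR`, so `n` is a unit of `R = ℤ[J⁻¹]`. Hence every prime
factor `p` of `n` is a unit of `R`, i.e. divides a product of primes of `J`, and so lies in `J`.
-/

open scoped TensorProduct

/- Stated for modules, with a pure tensor rather than `Subsingleton (A ⊗[R] B)`, because the
`ℤ`-module structure on `Localization M` used by the theorem is `AddCommGroup.toIntModule`, which is
not defeq to the one underlying its `ℤ`-algebra structure. -/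
theorem TensorProduct.one_tmul_one_eq_zero_of_injective_mul'_prod {R A B : Type*}
    [CommSemiring R] [Semiring A] [Semiring B] [Module R A] [Module R B]
    [SMulCommClass R A A] [IsScalarTower R A A] [SMulCommClass R B B] [IsScalarTower R B B]
    (h : Function.Injective (LinearMap.mul' R (A × B))) : (1 : A) ⊗ₜ[R] (1 : B) = 0 := by
  have hvanish : ((1, 0) : A × B) ⊗ₜ[R] ((0, 1) : A × B) = 0 :=
    h (by simp [LinearMap.mul'_apply])
  simpa using congrArg (TensorProduct.map (LinearMap.fst R A B) (LinearMap.snd R A B)) hvanish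

theorem TensorProduct.one_tmul_one_zmod_eq_zero_iff {A : Type*} [CommRing A] (n : ℕ) :
    (1 : A) ⊗ₜ[ℤ] (1 : ZMod n) = 0 ↔ IsUnit (n : A) := by
  let e : (A ⧸ (Ideal.span {(n : ℤ)}).map (algebraMap ℤ A)) ≃ₐ[A] A ⊗[ℤ] ZMod n :=
    (Algebra.TensorProduct.quotIdealMapEquivTensorQuot A _).trans
      (Algebra.TensorProduct.congr AlgEquiv.refl (Int.quotientSpanNatEquivZMod n).toIntAlgEquiv)
  rw [← Algebra.TensorProduct.one_def, ← map_one e, map_eq_zero_iff e e.injective,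
    eq_comm, Ideal.Quotient.zero_eq_one_iff, Ideal.map_span, Set.image_singleton,
    Ideal.span_singleton_eq_top, algebraMap_int_eq, eq_intCast, Int.cast_natCast]

theorem Prime.exists_mem_dvd_of_dvd_mem_closure {α : Type*} [CommMonoidWithZero α] {p : α}
    (hp : Prime p) {S : Set α} {m : α} (hm : m ∈ Submonoid.closure S) (hpm : p ∣ m) :
    ∃ s ∈ S, p ∣ s := by
  induction hm using Submonoid.closure_induction with
  | mem s hs => exact ⟨s, hs, hpm⟩
  | one => exact absurd (isUnit_of_dvd_one hpm) hp.not_isUnit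
  | mul x y _ _ ihx ihy => exact (hp.dvd_or_dvd hpm).elim ihx ihy

theorem prime_factors_mem_of_localization_prod_zmod_solid_general
    (J : Set ℕ) (hJ : ∀ p ∈ J, Nat.Prime p) (n : ℕ)
    (hsolid : Function.Bijective (LinearMap.mul' ℤ
      (Localization (Submonoid.closure ((Nat.cast : ℕ → ℤ) '' J)) × ZMod n))) :
    ∀ p : ℕ, p.Prime → p ∣ n → p ∈ J := by
  intro p hp hpn
  set M := Submonoid.closure ((Nat.cast : ℕ → ℤ) '' J)
  have hn_unit : IsUnit (n : Localization M) :=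
    (TensorProduct.one_tmul_one_zmod_eq_zero_iff n).mp
      (TensorProduct.one_tmul_one_eq_zero_of_injective_mul'_prod hsolid.injective)
  have hp_unit : IsUnit (algebraMap ℤ (Localization M) p) := by
    refine isUnit_of_dvd_unit ?_ hn_unit
    simpa using map_dvd (Nat.castRingHom (Localization M)) hpn
  obtain ⟨m, hm, hpm⟩ := (IsLocalization.algebraMap_isUnit_iff M).mp hp_unit
  obtain ⟨_, ⟨q, hq, rfl⟩, hpq⟩ :=
    (Nat.prime_iff_prime_int.mp hp).exists_mem_dvd_of_dvd_mem_closure hm hpm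
  rwa [(Nat.prime_dvd_prime_iff_eq hp (hJ q hq)).mp (Int.natCast_dvd_natCast.mp hpq)]

/-- Let `J` be a set of primes, `M` the submonoid of `ℤ` generated by `J`, and
`n` a positive integer.  If the product ring `(Localization of ℤ at M) × ℤ/nℤ`
is solid, then every prime factor of `n` belongs to `J`. -/
theorem prime_factors_mem_of_localization_prod_zmod_solid
    (J : Set ℕ) (hJ : ∀ p ∈ J, Nat.Prime p) (n : ℕ) (hn : 0 < n)
    (hsolid : Function.Bijective (LinearMap.mul' ℤ
      (Localization (Submonoid.closure ((Nat.cast : ℕ → ℤ) '' J)) × ZMod n))) :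
    ∀ p : ℕ, p.Prime → p ∣ n → p ∈ J :=
  prime_factors_mem_of_localization_prod_zmod_solid_general J hJ n hsolid
end

section
/- For a commutative ring R, the multiplication-induced ℤ-linear map R ⊗_ℤ R → R is bijective if and only if for every commutative ring S, any two ring homomorphisms from R to S are equal (equivalently, the unique ring homomorphism ℤ → R is an epimorphism of commutative rings). -/
universe u

open TensorProduct

/-- A commutative ring `R` is solid (the multiplication map `R ⊗_ℤ R → R` is
bijective) if and only if any two ring homomorphisms out of `R` into any
commutative ring agree, i.e. `ℤ → R` is an epimorphism of commutative rings. -/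
theorem solid_iff_ringHom_ext (R : Type u) [CommRing R] :
    Function.Bijective (LinearMap.mul' ℤ R) ↔
      ∀ (S : Type u) [CommRing S] (f g : R →+* S), f = g := by
  constructor
  · intro hbij S _ f g
    have key : ∀ r : R, r ⊗ₜ[ℤ] (1 : R) = (1 : R) ⊗ₜ[ℤ] r := by
      intro r
      apply hbij.injective
      simp [LinearMap.mul'_apply]
    let φ : R ⊗[ℤ] R →ₐ[ℤ] S :=
      Algebra.TensorProduct.lift f.toIntAlgHom g.toIntAlgHom (fun _ _ => Commute.all _ _)
    ext r
    have := congrArg φ (key r)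
    simpa [φ, Algebra.TensorProduct.lift_tmul] using this
  · intro h
    have key : ∀ r : R, r ⊗ₜ[ℤ] (1 : R) = (1 : R) ⊗ₜ[ℤ] r := by
      intro r
      have := h (R ⊗[ℤ] R) (Algebra.TensorProduct.includeLeftRingHom (R := ℤ))
        (Algebra.TensorProduct.includeRight (R := ℤ) (A := R)).toRingHom
      exact RingHom.congr_fun this r
    constructor
    · intro x y hxy
      have comp : ((Algebra.TensorProduct.includeLeft (R := ℤ) (S := ℤ)
            (A := R) (B := R)).toLinearMap ∘ₗ LinearMap.mul' ℤ R) = LinearMap.id := by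
        apply TensorProduct.ext'
        intro a b
        simp only [LinearMap.comp_apply, LinearMap.mul'_apply, LinearMap.id_apply,
          AlgHom.toLinearMap_apply, Algebra.TensorProduct.includeLeft_apply]
        calc (a * b) ⊗ₜ[ℤ] (1 : R) = (a ⊗ₜ[ℤ] (1:R)) * (b ⊗ₜ[ℤ] (1:R)) := by
              simp [Algebra.TensorProduct.tmul_mul_tmul]
          _ = (a ⊗ₜ[ℤ] (1:R)) * ((1:R) ⊗ₜ[ℤ] b) := by rw [key b]
          _ = a ⊗ₜ[ℤ] b := by simp [Algebra.TensorProduct.tmul_mul_tmul]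
      have := congrArg (fun L => L x) comp
      have := congrArg (fun L => L y) comp
      calc x = (Algebra.TensorProduct.includeLeft (R := ℤ) (S := ℤ)
            (A := R) (B := R)).toLinearMap (LinearMap.mul' ℤ R x) := by
              rw [← LinearMap.comp_apply, comp]; rfl
        _ = (Algebra.TensorProduct.includeLeft (R := ℤ) (S := ℤ)
            (A := R) (B := R)).toLinearMap (LinearMap.mul' ℤ R y) := by rw [hxy]
        _ = y := by rw [← LinearMap.comp_apply, comp]; rfl
    · intro r
      exact ⟨r ⊗ₜ[ℤ] 1, by simp [LinearMap.mul'_apply]⟩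
end

section
/- Let R be a commutative ring and let (S_i) be a directed family of subrings of R whose union is all of R. If each subring S_i is solid, i.e. the multiplication-induced ℤ-linear map S_i ⊗_ℤ S_i → S_i is bijective, then R is solid, i.e. the multiplication-induced ℤ-linear map R ⊗_ℤ R → R is bijective. -/
/-!
Every element of `R ⊗[ℤ] R` is a finite sum of pure tensors, so by directedness it comes from
`S i ⊗[ℤ] S i` for a single `i`. Multiplication commutes with the inclusions, and the inclusion
`S i → R` is injective, so two elements of `R ⊗[ℤ] R` with the same product come from two elements
of a single `S i ⊗[ℤ] S i` with the same product, where multiplication is injective.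
-/

open TensorProduct

section

variable {k A B : Type*} [CommSemiring k] [Semiring A] [Algebra k A] [Semiring B] [Algebra k B]

theorem LinearMap.mul'_comp_map_algHom (f : B →ₐ[k] A) :
    mul' k A ∘ₗ map f.toLinearMap f.toLinearMap = f.toLinearMap ∘ₗ mul' k B :=
  TensorProduct.ext' fun _ _ => (map_mul f _ _).symm

theorem LinearMap.mul'_surjective : Function.Surjective (mul' k A) :=
  fun a => ⟨a ⊗ₜ 1, by rw [mul'_apply, mul_one]⟩

namespace Subalgebra

theorem range_map_val_mono {S T : Subalgebra k A} (h : S ≤ T) :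
    LinearMap.range (TensorProduct.map S.val.toLinearMap S.val.toLinearMap) ≤
      LinearMap.range (TensorProduct.map T.val.toLinearMap T.val.toLinearMap) := by
  have hfactor : S.val.toLinearMap = T.val.toLinearMap ∘ₗ (inclusion h).toLinearMap := rfl
  rw [hfactor, TensorProduct.map_comp]
  exact LinearMap.range_comp_le_range _ _

variable {ι : Type*} {S : ι → Subalgebra k A}

theorem exists_mem_range_map_val_of_directed (hdir : Directed (· ≤ ·) S)
    (hunion : ∀ x : A, ∃ i, x ∈ S i) (z : A ⊗[k] A) :
    ∃ i, z ∈ LinearMap.range (TensorProduct.map (S i).val.toLinearMap (S i).val.toLinearMap) := by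
  induction z using TensorProduct.induction_on with
  | zero =>
    obtain ⟨i, -⟩ := hunion 0
    exact ⟨i, zero_mem _⟩
  | tmul a b =>
    obtain ⟨i, ha⟩ := hunion a
    obtain ⟨j, hb⟩ := hunion b
    obtain ⟨l, hil, hjl⟩ := hdir i j
    exact ⟨l, (⟨a, hil ha⟩ : S l) ⊗ₜ (⟨b, hjl hb⟩ : S l), rfl⟩
  | add x y hx hy =>
    obtain ⟨i, hi⟩ := hx
    obtain ⟨j, hj⟩ := hy
    obtain ⟨l, hil, hjl⟩ := hdir i j
    exact ⟨l, add_mem (range_map_val_mono hil hi) (range_map_val_mono hjl hj)⟩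

theorem mul'_injective_of_directed (hdir : Directed (· ≤ ·) S)
    (hunion : ∀ x : A, ∃ i, x ∈ S i) (hinj : ∀ i, Function.Injective (LinearMap.mul' k (S i))) :
    Function.Injective (LinearMap.mul' k A) := by
  intro z₁ z₂ hz
  obtain ⟨i, hi⟩ := exists_mem_range_map_val_of_directed hdir hunion z₁
  obtain ⟨j, hj⟩ := exists_mem_range_map_val_of_directed hdir hunion z₂
  obtain ⟨l, hil, hjl⟩ := hdir i j
  obtain ⟨w₁, rfl⟩ := range_map_val_mono hil hi
  obtain ⟨w₂, rfl⟩ := range_map_val_mono hjl hj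
  have hmul : (S l).val (LinearMap.mul' k (S l) w₁) = (S l).val (LinearMap.mul' k (S l) w₂) := by
    have hcomm := LinearMap.congr_fun (LinearMap.mul'_comp_map_algHom (S l).val)
    exact (hcomm w₁).symm.trans (hz.trans (hcomm w₂))
  rw [hinj l (Subtype.val_injective hmul)]

end Subalgebra

end

/-- If a commutative ring `R` is the union of a directed family of subrings
`S i`, each of which is solid (i.e. `S i ⊗_ℤ S i → S i` is bijective), then
`R` is solid (`R ⊗_ℤ R → R` is bijective). -/
theorem solid_of_directed_union_of_solid {R : Type*} [CommRing R]
    {ι : Type*} (S : ι → Subring R) (hdir : Directed (· ≤ ·) S)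
    (hunion : ∀ x : R, ∃ i, x ∈ S i)
    (hsolid : ∀ i, Function.Bijective (LinearMap.mul' ℤ (S i))) :
    Function.Bijective (LinearMap.mul' ℤ R) :=
  ⟨Subalgebra.mul'_injective_of_directed (S := fun i => subalgebraOfSubring (S i))
      (hdir.mono_comp _ fun _ _ h => h) hunion fun i => (hsolid i).injective,
    LinearMap.mul'_surjective⟩
end
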